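/- The ratio of consecutive unit-ball volumes satisfies √n · V_n/V_{n-1} = √(2π)·(1 − 1/(4n) + O(1/n²)) as n → ∞; in particular √n · V_n/V_{n-1} → √(2π). -/

import Mathlib

open Filter Real

/-- `V n` is the volume of the unit ball in `ℝ^n`. -/
noncomputable def unitBallVol (n : ℕ) : ℝ :=
  Real.pi ^ ((n : ℝ) / 2) / Real.Gamma ((n : ℝ) / 2 + 1)

/-!
With `R x = Γ(x + 1) / Γ(x + 1/2)` one has `V n / V (n - 1) = √π / R (n / 2)`, so the expansion
follows from `x + 1/4 ≤ R x ^ 2 ≤ x + 1/4 + 1/(16 x)`. Log-convexity of `Γ` gives the crude bounds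
`x ≤ R x ^ 2 ≤ x + 1/2`, and the recurrence `R x * R (x + 1/2) = x + 1/2` turns a two-sided bound
at `x + 1/2` into one at `x`, with the error multiplied by about `(x + 1/4) / (x + 1/2)`. After `m`
steps the accumulated factor is of order `√((2x + 1) / (2x + 1 + m))`, which tends to `0`.
-/
theorem Gamma_add_half_sq_le {x : ℝ} (hx : 0 < x) :
    Gamma (x + 1 / 2) ^ 2 ≤ Gamma x * Gamma (x + 1) := by
  have h := Gamma_mul_add_mul_le_rpow_Gamma_mul_rpow_Gamma hx (by linarith : 0 < x + 1)
    one_half_pos one_half_pos (add_halves 1)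
  rw [show 1 / 2 * x + 1 / 2 * (x + 1) = x + 1 / 2 by ring, ← sqrt_eq_rpow, ← sqrt_eq_rpow,
    ← sqrt_mul (Gamma_pos_of_pos hx).le] at h
  calc Gamma (x + 1 / 2) ^ 2 ≤ √(Gamma x * Gamma (x + 1)) ^ 2 :=
        pow_le_pow_left₀ (Gamma_pos_of_pos (by linarith)).le h 2
    _ = Gamma x * Gamma (x + 1) :=
        sq_sqrt (mul_pos (Gamma_pos_of_pos hx) (Gamma_pos_of_pos (by linarith))).le

noncomputable def gammaRatio (x : ℝ) : ℝ := Gamma (x + 1) / Gamma (x + 1 / 2)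

theorem gammaRatio_pos {x : ℝ} (hx : 0 < x + 1 / 2) : 0 < gammaRatio x :=
  div_pos (Gamma_pos_of_pos (by linarith)) (Gamma_pos_of_pos hx)

theorem gammaRatio_mul_gammaRatio_add_half {x : ℝ} (hx : 0 < x + 1 / 2) :
    gammaRatio x * gammaRatio (x + 1 / 2) = x + 1 / 2 := by
  have hΓ : Gamma (x + 1) ≠ 0 := (Gamma_pos_of_pos (by linarith)).ne'
  have hΓ' : Gamma (x + 1 / 2) ≠ 0 := (Gamma_pos_of_pos hx).ne'
  rw [gammaRatio, gammaRatio, show x + 1 / 2 + 1 / 2 = x + 1 by ring,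
    Gamma_add_one hx.ne']
  set g := Gamma (x + 1 / 2)
  field_simp

theorem le_gammaRatio_sq {x : ℝ} (hx : 0 < x) : x ≤ gammaRatio x ^ 2 := by
  rw [gammaRatio, div_pow, le_div_iff₀ (by positivity)]
  calc x * Gamma (x + 1 / 2) ^ 2 ≤ x * (Gamma x * Gamma (x + 1)) :=
        mul_le_mul_of_nonneg_left (Gamma_add_half_sq_le hx) hx.le
    _ = Gamma (x + 1) ^ 2 := by rw [Gamma_add_one hx.ne']; ring

theorem gammaRatio_sq_le {x : ℝ} (hx : 0 < x) : gammaRatio x ^ 2 ≤ x + 1 / 2 := by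
  have hx' : 0 < x + 1 / 2 := by linarith
  have h := Gamma_add_half_sq_le hx'
  rw [show x + 1 / 2 + 1 / 2 = x + 1 by ring, Gamma_add_one hx'.ne'] at h
  rw [gammaRatio, div_pow, div_le_iff₀ (by positivity)]
  nlinarith

noncomputable def bootstrapError (x : ℝ) (m : ℕ) : ℝ := √((2 * x + 1) / (2 * x + 1 + m)) / 4

theorem bootstrapError_nonneg (x : ℝ) (m : ℕ) : 0 ≤ bootstrapError x m := by
  unfold bootstrapError; positivity

theorem bootstrapError_le {x : ℝ} (hx : 0 < x) (m : ℕ) : bootstrapError x m ≤ 1 / 4 := by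
  have h : (2 * x + 1) / (2 * x + 1 + m) ≤ 1 :=
    div_le_one_of_le₀ (by linarith [m.cast_nonneg (α := ℝ)]) (by positivity)
  have := sqrt_le_one.mpr h
  unfold bootstrapError
  linarith

theorem bootstrapError_zero {x : ℝ} (hx : 0 < x) : bootstrapError x 0 = 1 / 4 := by
  rw [bootstrapError, Nat.cast_zero, add_zero, div_self (by linarith), sqrt_one]

theorem bootstrapError_add_half_mul_le {x : ℝ} (hx : 0 < x) (m : ℕ) :
    bootstrapError (x + 1 / 2) m * (x + 1 / 4) ≤ bootstrapError x (m + 1) * (x + 1 / 2) := by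
  have hsq : ∀ a b : ℝ, 0 ≤ a → 0 ≤ b → √a * b = √(a * b ^ 2) := fun a b ha hb => by
    rw [sqrt_mul ha, sqrt_sq hb]
  rw [bootstrapError, bootstrapError, show 2 * (x + 1 / 2) + 1 + (m : ℝ) = 2 * x + 2 + m by ring,
    Nat.cast_succ, show 2 * x + 1 + ((m : ℝ) + 1) = 2 * x + 2 + m by ring,
    div_mul_eq_mul_div, div_mul_eq_mul_div, hsq _ _ (by positivity) (by linarith),
    hsq _ _ (by positivity) (by linarith)]
  gcongr ?_ / 4
  apply sqrt_le_sqrt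
  rw [div_mul_eq_mul_div, div_mul_eq_mul_div]
  gcongr ?_ / _
  nlinarith

theorem tendsto_bootstrapError (x : ℝ) : Tendsto (bootstrapError x) atTop (nhds 0) := by
  have h : Tendsto (fun m : ℕ => (2 * x + 1) / (2 * x + 1 + m)) atTop (nhds 0) :=
    tendsto_const_nhds.div_atTop (tendsto_atTop_add_const_left _ _ tendsto_natCast_atTop_atTop)
  have := ((continuous_sqrt.tendsto 0).comp h).div_const 4
  rwa [sqrt_zero, zero_div] at this

theorem bootstrap_lower_step {x q q' ε ε' : ℝ} (hx : 0 < x) (hq' : 0 < q')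
    (hqq' : q * q' = (x + 1 / 2) ^ 2) (hε : 0 ≤ ε) (hε_le : ε ≤ 1 / 4) (hε' : 0 ≤ ε')
    (hεε' : ε' * (x + 1 / 4) ≤ ε * (x + 1 / 2))
    (hq'_le : q' ≤ x + 1 / 2 + 1 / 4 + 1 / (16 * (x + 1 / 2)) + ε') :
    x + 1 / 4 - ε ≤ q := by
  have he : (x + 1 / 4) * (1 / (16 * (x + 1 / 2))) ≤ 1 / 16 := by
    rw [mul_one_div, div_le_div_iff₀ (by positivity) (by norm_num)]; linarith
  have he0 : 0 ≤ 1 / (16 * (x + 1 / 2)) := by positivity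
  refine le_of_mul_le_mul_right ?_ hq'
  rw [hqq']
  nlinarith [mul_le_mul_of_nonneg_left hq'_le (by linarith : 0 ≤ x + 1 / 4 - ε),
    mul_nonneg hε he0, mul_nonneg hε hε']

theorem bootstrap_upper_step {x q q' ε ε' : ℝ} (hx : 0 < x) (hq' : 0 < q')
    (hqq' : q * q' = (x + 1 / 2) ^ 2) (hε : 0 ≤ ε) (hε'_le : ε' ≤ 1 / 4)
    (hεε' : ε' * (x + 1 / 4) ≤ ε * (x + 1 / 2)) (hle_q' : x + 1 / 2 + 1 / 4 - ε' ≤ q') :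
    q ≤ x + 1 / 4 + 1 / (16 * x) + ε := by
  have he : 1 / (16 * x) * x = 1 / 16 := by field_simp
  have he0 : 0 ≤ 1 / (16 * x) := by positivity
  refine le_of_mul_le_mul_right ?_ hq'
  rw [hqq']
  nlinarith [mul_le_mul_of_nonneg_left hle_q' (by linarith : 0 ≤ x + 1 / 4 + 1 / (16 * x) + ε),
    mul_le_mul_of_nonneg_left hε'_le he0, mul_le_mul_of_nonneg_left hε'_le hε]

theorem bounds_with_bootstrapError {Q : ℝ → ℝ}
    (hrec : ∀ x, 0 < x → Q x * Q (x + 1 / 2) = (x + 1 / 2) ^ 2)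
    (hlow : ∀ x, 0 < x → x ≤ Q x) (hup : ∀ x, 0 < x → Q x ≤ x + 1 / 2) (m : ℕ) :
    ∀ x, 0 < x → x + 1 / 4 - bootstrapError x m ≤ Q x ∧
      Q x ≤ x + 1 / 4 + 1 / (16 * x) + bootstrapError x m := by
  induction m with
  | zero =>
    intro x hx
    rw [bootstrapError_zero hx]
    have : 0 < 1 / (16 * x) := by positivity
    constructor <;> linarith [hlow x hx, hup x hx]
  | succ m ih =>
    intro x hx
    have hx' : 0 < x + 1 / 2 := by linarith
    obtain ⟨ih_low, ih_up⟩ := ih (x + 1 / 2) hx'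
    have hq' : 0 < Q (x + 1 / 2) := hx'.trans_le (hlow _ hx')
    have hεε' := bootstrapError_add_half_mul_le hx m
    exact ⟨bootstrap_lower_step hx hq' (hrec x hx) (bootstrapError_nonneg x _)
        (bootstrapError_le hx _) (bootstrapError_nonneg _ m) hεε' ih_up,
      bootstrap_upper_step hx hq' (hrec x hx) (bootstrapError_nonneg x _)
        (bootstrapError_le hx' m) hεε' ih_low⟩

theorem bounds_of_mul_add_half_eq {Q : ℝ → ℝ}
    (hrec : ∀ x, 0 < x → Q x * Q (x + 1 / 2) = (x + 1 / 2) ^ 2)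
    (hlow : ∀ x, 0 < x → x ≤ Q x) (hup : ∀ x, 0 < x → Q x ≤ x + 1 / 2) {x : ℝ} (hx : 0 < x) :
    x + 1 / 4 ≤ Q x ∧ Q x ≤ x + 1 / 4 + 1 / (16 * x) := by
  have hε := tendsto_bootstrapError x
  have hbounds := fun m => bounds_with_bootstrapError hrec hlow hup m x hx
  have hlow_lim := (tendsto_const_nhds (x := x + 1 / 4)).sub hε
  have hup_lim := (tendsto_const_nhds (x := x + 1 / 4 + 1 / (16 * x))).add hε
  rw [sub_zero] at hlow_lim
  rw [add_zero] at hup_lim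
  exact ⟨le_of_tendsto hlow_lim (Eventually.of_forall fun m => (hbounds m).1),
    ge_of_tendsto hup_lim (Eventually.of_forall fun m => (hbounds m).2)⟩

theorem gammaRatio_sq_bounds {x : ℝ} (hx : 0 < x) :
    x + 1 / 4 ≤ gammaRatio x ^ 2 ∧ gammaRatio x ^ 2 ≤ x + 1 / 4 + 1 / (16 * x) :=
  bounds_of_mul_add_half_eq (Q := fun x => gammaRatio x ^ 2)
    (fun x hx => by rw [← mul_pow, gammaRatio_mul_gammaRatio_add_half (by linarith)])
    (fun _ => le_gammaRatio_sq) (fun _ => gammaRatio_sq_le) hx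

theorem abs_sub_le_abs_sq_sub_sq_div {a b : ℝ} (ha : 0 ≤ a) (hb : 0 < b) :
    |a - b| ≤ |a ^ 2 - b ^ 2| / b := by
  rw [le_div_iff₀ hb, sq_sub_sq, abs_mul, abs_of_pos (by linarith : 0 < a + b), mul_comm]
  exact mul_le_mul_of_nonneg_right (by linarith) (abs_nonneg _)

theorem abs_div_sq_sub_sq_le {x ρ : ℝ} (hx : 0 < x) (hlow : x + 1 / 4 ≤ ρ ^ 2)
    (hup : ρ ^ 2 ≤ x + 1 / 4 + 1 / (16 * x)) :
    |x / ρ ^ 2 - (1 - 1 / (8 * x)) ^ 2| ≤ 3 / (64 * x ^ 2) := by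
  have hρ : 0 < ρ ^ 2 := by linarith
  have hfar : x / (x + 1 / 4) - (1 - 1 / (8 * x)) ^ 2 =
      (12 * x - 1) / (64 * x ^ 2 * (4 * x + 1)) := by
    field_simp; ring
  have hnear : (1 - 1 / (8 * x)) ^ 2 - x / (x + 1 / 4 + 1 / (16 * x)) =
      (16 * x ^ 2 - 12 * x + 1) / (64 * x ^ 2 * (16 * x ^ 2 + 4 * x + 1)) := by
    field_simp; ring
  have hfar_le : (12 * x - 1) / (64 * x ^ 2 * (4 * x + 1)) ≤ 3 / (64 * x ^ 2) := by
    rw [div_le_div_iff₀ (by positivity) (by positivity)]; nlinarith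
  have hnear_le :
      (16 * x ^ 2 - 12 * x + 1) / (64 * x ^ 2 * (16 * x ^ 2 + 4 * x + 1)) ≤ 3 / (64 * x ^ 2) := by
    rw [div_le_div_iff₀ (by positivity) (by positivity)]; nlinarith
  have h_lo : x / (x + 1 / 4 + 1 / (16 * x)) ≤ x / ρ ^ 2 := by gcongr
  have h_hi : x / ρ ^ 2 ≤ x / (x + 1 / 4) := by gcongr
  rw [abs_le]
  constructor <;> linarith

theorem abs_sqrt_div_gammaRatio_sub_le {x : ℝ} (hx : 1 / 2 ≤ x) :
    |√x / gammaRatio x - (1 - 1 / (8 * x))| ≤ 1 / (16 * x ^ 2) := by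
  have hx0 : 0 < x := by linarith
  obtain ⟨hlow, hup⟩ := gammaRatio_sq_bounds hx0
  have hv : 3 / 4 ≤ 1 - 1 / (8 * x) := by
    rw [le_sub_comm, div_le_iff₀ (by positivity)]; linarith
  have hs : (√x / gammaRatio x) ^ 2 = x / gammaRatio x ^ 2 := by rw [div_pow, sq_sqrt hx0.le]
  calc |√x / gammaRatio x - (1 - 1 / (8 * x))|
      ≤ |(√x / gammaRatio x) ^ 2 - (1 - 1 / (8 * x)) ^ 2| / (1 - 1 / (8 * x)) :=
        abs_sub_le_abs_sq_sub_sq_div (div_nonneg (sqrt_nonneg x) (gammaRatio_pos (by linarith)).le)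
          (by linarith)
    _ ≤ 3 / (64 * x ^ 2) / (3 / 4) := by
        rw [hs]; gcongr; exact abs_div_sq_sub_sq_le hx0 hlow hup
    _ = 1 / (16 * x ^ 2) := by ring

theorem unitBallVol_div_unitBallVol_sub_one {n : ℕ} (hn : 1 ≤ n) :
    unitBallVol n / unitBallVol (n - 1) = √π / gammaRatio (n / 2) := by
  have hpow : π ^ ((n : ℝ) / 2) = π ^ (((n - 1 : ℕ) : ℝ) / 2) * √π := by
    rw [sqrt_eq_rpow, ← rpow_add pi_pos, Nat.cast_sub hn]; ring_nf
  have hΓ : ((n - 1 : ℕ) : ℝ) / 2 + 1 = n / 2 + 1 / 2 := by rw [Nat.cast_sub hn]; ring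
  rw [unitBallVol, unitBallVol, gammaRatio, hpow, hΓ]
  field_simp

theorem sqrt_mul_unitBallVol_div_sub_le {n : ℕ} (hn : 1 ≤ n) :
    |√n * unitBallVol n / unitBallVol (n - 1) - √(2 * π) * (1 - 1 / (4 * n))| ≤
      √(2 * π) / 4 / n ^ 2 := by
  have hn' : (1 / 2 : ℝ) ≤ n / 2 := by
    have : (1 : ℝ) ≤ n := by exact_mod_cast hn
    linarith
  calc |√n * unitBallVol n / unitBallVol (n - 1) - √(2 * π) * (1 - 1 / (4 * n))|
      = |√(2 * π) * (√(n / 2) / gammaRatio (n / 2) - (1 - 1 / (8 * (n / 2))))| := by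
        rw [mul_div_assoc, unitBallVol_div_unitBallVol_sub_one hn, sqrt_div' _ zero_le_two,
          sqrt_mul zero_le_two]
        field_simp
        ring_nf
    _ = √(2 * π) * |√(n / 2) / gammaRatio (n / 2) - (1 - 1 / (8 * (n / 2)))| := by
        rw [abs_mul, abs_of_nonneg (sqrt_nonneg _)]
    _ ≤ √(2 * π) * (1 / (16 * (n / 2) ^ 2)) := by
        gcongr; exact abs_sqrt_div_gammaRatio_sub_le hn'
    _ = √(2 * π) / 4 / n ^ 2 := by ring

theorem stmt11 :
    (∃ C : ℝ, ∀ n : ℕ, 1 ≤ n →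
      |Real.sqrt n * unitBallVol n / unitBallVol (n - 1) -
        Real.sqrt (2 * Real.pi) * (1 - 1 / (4 * n))| ≤ C / n ^ 2) ∧
    Tendsto (fun n : ℕ => Real.sqrt n * unitBallVol n / unitBallVol (n - 1)) atTop
      (nhds (Real.sqrt (2 * Real.pi))) := by
  refine ⟨⟨_, fun n hn => sqrt_mul_unitBallVol_div_sub_le hn⟩, ?_⟩
  have hmain : Tendsto (fun n : ℕ => √(2 * π) * (1 - 1 / (4 * n))) atTop (nhds (√(2 * π))) := by
    have h := (tendsto_const_div_atTop_nhds_zero_nat (1 / 4 : ℝ)).const_sub 1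
    simp_rw [div_div, sub_zero] at h
    simpa using h.const_mul (√(2 * π))
  have herr := tendsto_const_div_pow (√(2 * π) / 4) 2 two_ne_zero
  have hdiff : Tendsto (fun n : ℕ => √n * unitBallVol n / unitBallVol (n - 1) -
      √(2 * π) * (1 - 1 / (4 * n))) atTop (nhds 0) :=
    squeeze_zero_norm' (eventually_ge_atTop 1 |>.mono
      fun n hn => sqrt_mul_unitBallVol_div_sub_le hn) herr
  simpa using hdiff.add hmain
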